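/- Let d ≥ 1, λ > 0, let Σ₁, Σ₂ be real symmetric positive-definite d×d matrices and μ₁, μ₂ ∈ ℝ^d. Assume the matrix (λ+1)Σ₂⁻¹ − λΣ₁⁻¹ is positive definite, and set Σ̃_λ = ((λ+1)Σ₂⁻¹ − λΣ₁⁻¹)⁻¹ and μ̃_λ = Σ̃_λ·((λ+1)Σ₂⁻¹μ₂ − λΣ₁⁻¹μ₁). Let f and g be the densities of N_d(μ₁, Σ₁) and N_d(μ₂, Σ₂) respectively. Then ∫_{ℝ^d} [ (1/λ)(g/f)^{λ+1} − ((λ+1)/λ)(g/f) + 1 ]·f dx = (1/λ)·( (det(Σ₁Σ₂⁻¹))^{λ+1}·det(Σ̃_λ)/det(Σ₁) )^{1/2} · exp( −((λ+1)/2)·μ₂ᵀΣ₂⁻¹μ₂ + (λ/2)·μ₁ᵀΣ₁⁻¹μ₁ + ½·μ̃_λᵀ Σ̃_λ⁻¹ μ̃_λ ) − 1/λ. -/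

import Mathlib

/-!
Both densities are exponentials of quadratic forms, so `g ^ (λ + 1) * f ^ (-λ)` is again the
exponential of a quadratic form, with matrix `(λ + 1) Σ₂⁻¹ - λ Σ₁⁻¹`; completing the square around
`μ̃_λ` turns its integral into a Gaussian integral, which the substitution `y = B x` for
`Σ̃_λ⁻¹ = Bᵀ B` reduces to the standard one. The other two terms of the integrand integrate to
`-(λ + 1) / λ` and `1`, since `f` and `g` are probability densities.
-/

open Real MeasureTheory Matrix

namespace Matrix

variable {ι R : Type*}

lemma PosDef.isSymm {A : Matrix ι ι ℝ} (hA : A.PosDef) : A.IsSymm :=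
  isHermitian_iff_isSymm.mp hA.isHermitian

variable [Fintype ι] [CommRing R]

lemma IsSymm.dotProduct_mulVec_comm {A : Matrix ι ι R} (hA : A.IsSymm) (x y : ι → R) :
    x ⬝ᵥ (A *ᵥ y) = y ⬝ᵥ (A *ᵥ x) := by
  rw [dotProduct_mulVec, ← mulVec_transpose, hA.eq, dotProduct_comm]

lemma IsSymm.sub_dotProduct_mulVec_sub {A : Matrix ι ι R} (hA : A.IsSymm) (x μ : ι → R) :
    (x - μ) ⬝ᵥ (A *ᵥ (x - μ)) = x ⬝ᵥ (A *ᵥ x) - 2 * ((A *ᵥ μ) ⬝ᵥ x) + μ ⬝ᵥ (A *ᵥ μ) := by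
  rw [mulVec_sub, dotProduct_sub, sub_dotProduct, sub_dotProduct, hA.dotProduct_mulVec_comm μ x,
    dotProduct_comm x (A *ᵥ μ)]
  ring

/-- Completing the square in a linear combination of two quadratic forms. -/
lemma IsSymm.smul_add_smul_sub_dotProduct_mulVec_sub {A B : Matrix ι ι R} (hA : A.IsSymm)
    (hB : B.IsSymm) (a b : R) (μ ν m x : ι → R)
    (hm : (a • A + b • B) *ᵥ m = a • (A *ᵥ μ) + b • (B *ᵥ ν)) :
    a * ((x - μ) ⬝ᵥ (A *ᵥ (x - μ))) + b * ((x - ν) ⬝ᵥ (B *ᵥ (x - ν)))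
      = (x - m) ⬝ᵥ ((a • A + b • B) *ᵥ (x - m))
        + (a * (μ ⬝ᵥ (A *ᵥ μ)) + b * (ν ⬝ᵥ (B *ᵥ ν)) - m ⬝ᵥ ((a • A + b • B) *ᵥ m)) := by
  have hM : (a • A + b • B).IsSymm := (hA.smul a).add (hB.smul b)
  rw [hA.sub_dotProduct_mulVec_sub, hB.sub_dotProduct_mulVec_sub, hM.sub_dotProduct_mulVec_sub, hm]
  simp only [add_mulVec, smul_mulVec, dotProduct_add, add_dotProduct, dotProduct_smul,
    smul_dotProduct, smul_eq_mul]
  ring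

lemma dotProduct_transpose_mul_mulVec (B : Matrix ι ι R) (x : ι → R) :
    x ⬝ᵥ ((Bᵀ * B) *ᵥ x) = (B *ᵥ x) ⬝ᵥ (B *ᵥ x) := by
  rw [← mulVec_mulVec, dotProduct_mulVec, vecMul_transpose]

open scoped MatrixOrder in
lemma PosSemidef.exists_eq_transpose_mul_self [DecidableEq ι] {A : Matrix ι ι ℝ}
    (hA : A.PosSemidef) : ∃ B : Matrix ι ι ℝ, A = Bᵀ * B := by
  obtain ⟨B, rfl⟩ := CStarAlgebra.nonneg_iff_eq_star_mul_self.mp hA.nonneg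
  exact ⟨B, by rw [star_eq_conjTranspose, conjTranspose_eq_transpose_of_trivial]⟩

end Matrix

variable {ι : Type*} [Fintype ι]

lemma exp_neg_half_dotProduct_self (x : ι → ℝ) :
    exp (-(1 / 2) * (x ⬝ᵥ x)) = ∏ i, exp (-(1 / 2) * x i ^ 2) := by
  simp only [← exp_sum, ← Finset.mul_sum, dotProduct, pow_two]

lemma integrable_exp_neg_half_dotProduct_self :
    Integrable (fun x : ι → ℝ => exp (-(1 / 2) * (x ⬝ᵥ x))) := by
  simp_rw [exp_neg_half_dotProduct_self]
  exact Integrable.fintype_prod fun _ => integrable_exp_neg_mul_sq (by norm_num)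

lemma integral_exp_neg_half_dotProduct_self :
    ∫ x : ι → ℝ, exp (-(1 / 2) * (x ⬝ᵥ x)) = √((2 * π) ^ Fintype.card ι) := by
  simp_rw [exp_neg_half_dotProduct_self]
  rw [integral_fintype_prod_volume_eq_pow (fun t : ℝ => exp (-(1 / 2) * t ^ 2)),
    integral_gaussian, ← Finset.card_univ, ← Finset.prod_const, ← Finset.prod_const,
    sqrt_prod _ (by intros; positivity)]
  norm_num [div_eq_mul_inv, mul_comm]

variable [DecidableEq ι]

section mulVec

variable {E : Type*} [NormedAddCommGroup E] {B : Matrix ι ι ℝ}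

lemma measurableEmbedding_mulVec (hB : B.det ≠ 0) : MeasurableEmbedding (B *ᵥ ·) :=
  (toLinearEquiv' B (invertibleOfIsUnitDet B hB.isUnit)).toContinuousLinearEquiv.toHomeomorph
    |>.measurableEmbedding

lemma map_mulVec_volume (hB : B.det ≠ 0) :
    Measure.map (B *ᵥ ·) volume = ENNReal.ofReal |B.det|⁻¹ • (volume : Measure (ι → ℝ)) := by
  rw [← abs_inv, ← map_matrix_volume_pi_eq_smul_volume_pi hB]
  rfl

lemma integrable_comp_mulVec_iff (hB : B.det ≠ 0) {h : (ι → ℝ) → E} :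
    Integrable (fun x => h (B *ᵥ x)) ↔ Integrable h := by
  rw [← Function.comp_def, ← (measurableEmbedding_mulVec hB).integrable_map_iff,
    map_mulVec_volume hB, integrable_smul_measure (by simpa using hB) ENNReal.ofReal_ne_top]

lemma integral_comp_mulVec [NormedSpace ℝ E] (hB : B.det ≠ 0) (h : (ι → ℝ) → E) :
    ∫ x, h (B *ᵥ x) = |B.det|⁻¹ • ∫ y, h y := by
  rw [← (measurableEmbedding_mulVec hB).integral_map, map_mulVec_volume hB, integral_smul_measure,
    ENNReal.toReal_ofReal (by positivity)]

end mulVec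

namespace Matrix.PosDef

variable {A : Matrix ι ι ℝ}

lemma integrable_exp_neg_half_dotProduct_mulVec (hA : A.PosDef) :
    Integrable (fun x : ι → ℝ => exp (-(1 / 2) * (x ⬝ᵥ (A *ᵥ x)))) := by
  obtain ⟨B, rfl⟩ := hA.posSemidef.exists_eq_transpose_mul_self
  have hB : B.det ≠ 0 := by simpa [det_mul] using hA.det_pos.ne'
  simp_rw [dotProduct_transpose_mul_mulVec]
  exact (integrable_comp_mulVec_iff hB).2 integrable_exp_neg_half_dotProduct_self

lemma integral_exp_neg_half_dotProduct_mulVec (hA : A.PosDef) :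
    ∫ x : ι → ℝ, exp (-(1 / 2) * (x ⬝ᵥ (A *ᵥ x))) = √((2 * π) ^ Fintype.card ι / A.det) := by
  obtain ⟨B, rfl⟩ := hA.posSemidef.exists_eq_transpose_mul_self
  have hB : B.det ≠ 0 := by simpa [det_mul] using hA.det_pos.ne'
  simp_rw [dotProduct_transpose_mul_mulVec]
  rw [integral_comp_mulVec hB (fun y => exp (-(1 / 2) * (y ⬝ᵥ y))),
    integral_exp_neg_half_dotProduct_self, det_mul, det_transpose, ← sq,
    sqrt_div' _ (sq_nonneg _), sqrt_sq_eq_abs, smul_eq_mul, inv_mul_eq_div]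

lemma integrable_exp_neg_half_sub_dotProduct_mulVec_sub (hA : A.PosDef) (μ : ι → ℝ) :
    Integrable (fun x : ι → ℝ => exp (-(1 / 2) * ((x - μ) ⬝ᵥ (A *ᵥ (x - μ))))) :=
  hA.integrable_exp_neg_half_dotProduct_mulVec.comp_sub_right μ

lemma integral_exp_neg_half_sub_dotProduct_mulVec_sub (hA : A.PosDef) (μ : ι → ℝ) :
    ∫ x : ι → ℝ, exp (-(1 / 2) * ((x - μ) ⬝ᵥ (A *ᵥ (x - μ))))
      = √((2 * π) ^ Fintype.card ι / A.det) := by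
  rw [integral_sub_right_eq_self (fun x => exp (-(1 / 2) * (x ⬝ᵥ (A *ᵥ x)))) μ,
    hA.integral_exp_neg_half_dotProduct_mulVec]

end Matrix.PosDef

noncomputable def mvNormalPDF (μ : ι → ℝ) (S : Matrix ι ι ℝ) (x : ι → ℝ) : ℝ :=
  (√((2 * π) • S).det)⁻¹ * exp (-(1 / 2) * ((x - μ) ⬝ᵥ (S⁻¹ *ᵥ (x - μ))))

section mvNormalPDF

variable {μ ν m : ι → ℝ} {S T : Matrix ι ι ℝ}

lemma det_two_pi_smul_pos (hS : S.PosDef) : 0 < ((2 * π) • S).det := by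
  rw [det_smul]
  exact mul_pos (by positivity) hS.det_pos

lemma mvNormalPDF_pos (hS : S.PosDef) (x : ι → ℝ) : 0 < mvNormalPDF μ S x := by
  have := det_two_pi_smul_pos hS
  unfold mvNormalPDF
  positivity

lemma integrable_mvNormalPDF (hS : S.PosDef) : Integrable (mvNormalPDF μ S) :=
  (hS.inv.integrable_exp_neg_half_sub_dotProduct_mulVec_sub μ).const_mul _

lemma integral_mvNormalPDF (hS : S.PosDef) : ∫ x, mvNormalPDF μ S x = 1 := by
  simp only [mvNormalPDF]
  rw [integral_const_mul, hS.inv.integral_exp_neg_half_sub_dotProduct_mulVec_sub, det_smul,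
    det_nonsing_inv, Ring.inverse_eq_inv', div_inv_eq_mul, ← det_smul]
  exact inv_mul_cancel₀ (sqrt_pos.2 (det_two_pi_smul_pos hS)).ne'

lemma mvNormalPDF_rpow (hS : S.PosDef) (a : ℝ) (x : ι → ℝ) :
    mvNormalPDF μ S x ^ a = ((2 * π) • S).det ^ (-a / 2)
      * exp (-(a / 2) * ((x - μ) ⬝ᵥ (S⁻¹ *ᵥ (x - μ)))) := by
  have hD := det_two_pi_smul_pos hS
  rw [mvNormalPDF, mul_rpow (by positivity) (exp_nonneg _), ← exp_mul, sqrt_eq_rpow,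
    ← rpow_neg_one, ← rpow_mul hD.le, ← rpow_mul hD.le]
  ring_nf

lemma mvNormalPDF_rpow_mul_rpow (hS : S.PosDef) (hT : T.PosDef) (a b : ℝ)
    (hm : (a • S⁻¹ + b • T⁻¹) *ᵥ m = a • (S⁻¹ *ᵥ μ) + b • (T⁻¹ *ᵥ ν)) (x : ι → ℝ) :
    mvNormalPDF μ S x ^ a * mvNormalPDF ν T x ^ b
      = ((2 * π) • S).det ^ (-a / 2) * ((2 * π) • T).det ^ (-b / 2)
        * exp (-(1 / 2) * (a * (μ ⬝ᵥ (S⁻¹ *ᵥ μ)) + b * (ν ⬝ᵥ (T⁻¹ *ᵥ ν))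
          - m ⬝ᵥ ((a • S⁻¹ + b • T⁻¹) *ᵥ m)))
        * exp (-(1 / 2) * ((x - m) ⬝ᵥ ((a • S⁻¹ + b • T⁻¹) *ᵥ (x - m)))) := by
  have hquad := hS.inv.isSymm.smul_add_smul_sub_dotProduct_mulVec_sub hT.inv.isSymm a b μ ν m x hm
  rw [mvNormalPDF_rpow hS, mvNormalPDF_rpow hT, mul_mul_mul_comm, ← exp_add, mul_assoc _ (exp _),
    ← exp_add]
  congr 2
  linear_combination (-1 / 2 : ℝ) * hquad

lemma integrable_mvNormalPDF_rpow_mul_rpow (hS : S.PosDef) (hT : T.PosDef) (a b : ℝ)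
    (hM : (a • S⁻¹ + b • T⁻¹).PosDef)
    (hm : (a • S⁻¹ + b • T⁻¹) *ᵥ m = a • (S⁻¹ *ᵥ μ) + b • (T⁻¹ *ᵥ ν)) :
    Integrable (fun x => mvNormalPDF μ S x ^ a * mvNormalPDF ν T x ^ b) := by
  simp_rw [mvNormalPDF_rpow_mul_rpow hS hT a b hm]
  exact (hM.integrable_exp_neg_half_sub_dotProduct_mulVec_sub m).const_mul _

lemma integral_mvNormalPDF_rpow_mul_rpow (hS : S.PosDef) (hT : T.PosDef) (a b : ℝ)
    (hM : (a • S⁻¹ + b • T⁻¹).PosDef)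
    (hm : (a • S⁻¹ + b • T⁻¹) *ᵥ m = a • (S⁻¹ *ᵥ μ) + b • (T⁻¹ *ᵥ ν)) :
    ∫ x, mvNormalPDF μ S x ^ a * mvNormalPDF ν T x ^ b
      = ((2 * π) • S).det ^ (-a / 2) * ((2 * π) • T).det ^ (-b / 2)
        * √((2 * π) ^ Fintype.card ι / (a • S⁻¹ + b • T⁻¹).det)
        * exp (-(1 / 2) * (a * (μ ⬝ᵥ (S⁻¹ *ᵥ μ)) + b * (ν ⬝ᵥ (T⁻¹ *ᵥ ν))
          - m ⬝ᵥ ((a • S⁻¹ + b • T⁻¹) *ᵥ m))) := by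
  simp_rw [mvNormalPDF_rpow_mul_rpow hS hT a b hm]
  rw [integral_const_mul, hM.integral_exp_neg_half_sub_dotProduct_mulVec_sub, mul_right_comm]

end mvNormalPDF

lemma det_two_pi_smul_rpow_mul_rpow_mul_sqrt {S T M : Matrix ι ι ℝ} (hS : S.PosDef)
    (hT : T.PosDef) (hM : M.PosDef) (lam : ℝ) :
    ((2 * π) • T).det ^ (-(lam + 1) / 2) * ((2 * π) • S).det ^ (-(-lam) / 2)
        * √((2 * π) ^ Fintype.card ι / M.det)
      = ((S * T⁻¹).det ^ (lam + 1) * M⁻¹.det / S.det) ^ (1 / 2 : ℝ) := by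
  -- written as exponentials of logarithms, both sides have linear exponents
  rw [det_smul, det_smul, det_mul, det_nonsing_inv, det_nonsing_inv, Ring.inverse_eq_inv',
    ← exp_log hS.det_pos, ← exp_log hT.det_pos, ← exp_log hM.det_pos,
    ← exp_log (show 0 < (2 * π) ^ Fintype.card ι by positivity)]
  simp only [← exp_add, ← exp_neg, ← exp_sub, ← exp_mul, sqrt_eq_rpow]
  ring_nf

section Bregman

variable {α : Type*} [MeasurableSpace α] {ρ : Measure α} {f g : α → ℝ} {lam : ℝ}

lemma bregman_integrand_eq {u v : ℝ} (hu : 0 < u) (hv : 0 ≤ v) :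
    ((1 / lam) * (v / u) ^ (lam + 1) - ((lam + 1) / lam) * (v / u) + 1) * u
      = (1 / lam) * (v ^ (lam + 1) * u ^ (-lam)) - ((lam + 1) / lam) * v + u := by
  rw [div_rpow hv hu.le, show -lam = 1 - (lam + 1) by ring, rpow_sub hu, rpow_one]
  field_simp

lemma integral_bregman_integrand (hlam : lam ≠ 0) (hf : ∀ x, 0 < f x) (hg : ∀ x, 0 ≤ g x)
    (hfi : Integrable f ρ) (hgi : Integrable g ρ) (hf1 : ∫ x, f x ∂ρ = 1) (hg1 : ∫ x, g x ∂ρ = 1)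
    (hI : Integrable (fun x => g x ^ (lam + 1) * f x ^ (-lam)) ρ) :
    ∫ x, ((1 / lam) * (g x / f x) ^ (lam + 1) - ((lam + 1) / lam) * (g x / f x) + 1) * f x ∂ρ
      = (1 / lam) * ∫ x, g x ^ (lam + 1) * f x ^ (-lam) ∂ρ - 1 / lam := by
  simp_rw [bregman_integrand_eq (hf _) (hg _)]
  rw [integral_add ?_ hfi, integral_sub (hI.const_mul _) (hgi.const_mul _), integral_const_mul,
    integral_const_mul, hf1, hg1]
  · field_simp
    ring
  · exact (hI.const_mul _).sub (hgi.const_mul _)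

end Bregman

theorem stmt_6_general (d : ℕ) (lam : ℝ) (hlam : 0 < lam)
    (S₁ S₂ : Matrix (Fin d) (Fin d) ℝ) (hS₁ : S₁.PosDef) (hS₂ : S₂.PosDef)
    (μ₁ μ₂ : Fin d → ℝ)
    (hpos : ((lam + 1) • S₂⁻¹ - lam • S₁⁻¹).PosDef)
    (St : Matrix (Fin d) (Fin d) ℝ) (hSt : St = ((lam + 1) • S₂⁻¹ - lam • S₁⁻¹)⁻¹)
    (μt : Fin d → ℝ) (hμt : μt = St *ᵥ ((lam + 1) • (S₂⁻¹ *ᵥ μ₂) - lam • (S₁⁻¹ *ᵥ μ₁)))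
    (f g : (Fin d → ℝ) → ℝ)
    (hf : f = fun x => (Real.sqrt (((2 * π) • S₁).det))⁻¹ *
        Real.exp (-(1 / 2) * ((x - μ₁) ⬝ᵥ (S₁⁻¹ *ᵥ (x - μ₁)))))
    (hg : g = fun x => (Real.sqrt (((2 * π) • S₂).det))⁻¹ *
        Real.exp (-(1 / 2) * ((x - μ₂) ⬝ᵥ (S₂⁻¹ *ᵥ (x - μ₂))))) :
    ∫ x : Fin d → ℝ,
        ((1 / lam) * (g x / f x) ^ (lam + 1) - ((lam + 1) / lam) * (g x / f x) + 1) * f x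
      = (1 / lam) * (((S₁ * S₂⁻¹).det ^ (lam + 1) * St.det / S₁.det) ^ ((1 : ℝ) / 2)) *
          Real.exp (-((lam + 1) / 2) * (μ₂ ⬝ᵥ (S₂⁻¹ *ᵥ μ₂))
            + (lam / 2) * (μ₁ ⬝ᵥ (S₁⁻¹ *ᵥ μ₁))
            + (1 / 2) * (μt ⬝ᵥ (St⁻¹ *ᵥ μt))) - 1 / lam := by
  obtain rfl : f = mvNormalPDF μ₁ S₁ := hf
  obtain rfl : g = mvNormalPDF μ₂ S₂ := hg
  have hM : (lam + 1) • S₂⁻¹ - lam • S₁⁻¹ = (lam + 1) • S₂⁻¹ + (-lam) • S₁⁻¹ := by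
    rw [neg_smul, sub_eq_add_neg]
  rw [hM] at hpos hSt
  have hStinv : St⁻¹ = (lam + 1) • S₂⁻¹ + (-lam) • S₁⁻¹ := by
    rw [hSt, nonsing_inv_nonsing_inv _ hpos.det_pos.ne'.isUnit]
  have hm : ((lam + 1) • S₂⁻¹ + (-lam) • S₁⁻¹) *ᵥ μt
      = (lam + 1) • (S₂⁻¹ *ᵥ μ₂) + (-lam) • (S₁⁻¹ *ᵥ μ₁) := by
    rw [hμt, hSt, mulVec_mulVec, mul_nonsing_inv _ hpos.det_pos.ne'.isUnit, one_mulVec, neg_smul,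
      sub_eq_add_neg]
  rw [integral_bregman_integrand hlam.ne' (mvNormalPDF_pos hS₁)
      (fun x => (mvNormalPDF_pos hS₂ x).le) (integrable_mvNormalPDF hS₁)
      (integrable_mvNormalPDF hS₂) (integral_mvNormalPDF hS₁) (integral_mvNormalPDF hS₂)
      (integrable_mvNormalPDF_rpow_mul_rpow hS₂ hS₁ _ _ hpos hm),
    integral_mvNormalPDF_rpow_mul_rpow hS₂ hS₁ _ _ hpos hm, hStinv, hSt,
    det_two_pi_smul_rpow_mul_rpow_mul_sqrt hS₁ hS₂ hpos]
  ring_nf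

/-- Closed form of the λ-Bregman divergence between two multivariate normal densities
`f ~ N_d(μ₁, Σ₁)` and `g ~ N_d(μ₂, Σ₂)`, assuming `(λ+1)Σ₂⁻¹ − λΣ₁⁻¹` is positive
definite, with `Σ̃_λ = ((λ+1)Σ₂⁻¹ − λΣ₁⁻¹)⁻¹` and
`μ̃_λ = Σ̃_λ·((λ+1)Σ₂⁻¹μ₂ − λΣ₁⁻¹μ₁)`. -/
theorem stmt_6 (d : ℕ) (hd : 1 ≤ d) (lam : ℝ) (hlam : 0 < lam)
    (S₁ S₂ : Matrix (Fin d) (Fin d) ℝ) (hS₁ : S₁.PosDef) (hS₂ : S₂.PosDef)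
    (μ₁ μ₂ : Fin d → ℝ)
    (hpos : ((lam + 1) • S₂⁻¹ - lam • S₁⁻¹).PosDef)
    (St : Matrix (Fin d) (Fin d) ℝ) (hSt : St = ((lam + 1) • S₂⁻¹ - lam • S₁⁻¹)⁻¹)
    (μt : Fin d → ℝ) (hμt : μt = St *ᵥ ((lam + 1) • (S₂⁻¹ *ᵥ μ₂) - lam • (S₁⁻¹ *ᵥ μ₁)))
    (f g : (Fin d → ℝ) → ℝ)
    (hf : f = fun x => (Real.sqrt (((2 * π) • S₁).det))⁻¹ *
        Real.exp (-(1 / 2) * ((x - μ₁) ⬝ᵥ (S₁⁻¹ *ᵥ (x - μ₁)))))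
    (hg : g = fun x => (Real.sqrt (((2 * π) • S₂).det))⁻¹ *
        Real.exp (-(1 / 2) * ((x - μ₂) ⬝ᵥ (S₂⁻¹ *ᵥ (x - μ₂))))) :
    ∫ x : Fin d → ℝ,
        ((1 / lam) * (g x / f x) ^ (lam + 1) - ((lam + 1) / lam) * (g x / f x) + 1) * f x
      = (1 / lam) * (((S₁ * S₂⁻¹).det ^ (lam + 1) * St.det / S₁.det) ^ ((1 : ℝ) / 2)) *
          Real.exp (-((lam + 1) / 2) * (μ₂ ⬝ᵥ (S₂⁻¹ *ᵥ μ₂))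
            + (lam / 2) * (μ₁ ⬝ᵥ (S₁⁻¹ *ᵥ μ₁))
            + (1 / 2) * (μt ⬝ᵥ (St⁻¹ *ᵥ μt))) - 1 / lam :=
  stmt_6_general d lam hlam S₁ S₂ hS₁ hS₂ μ₁ μ₂ hpos St hSt μt hμt f g hf hg
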